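/- arXiv:math/0610777 — 4 statements merged into one kernel-verified Lean document; each statement's English description precedes it below -/
import Mathlib

section
/- In the symmetric group S_n with generating set T of all transpositions, the Hurwitz action of the braid group B_{n-1} on the set of reduced T-decompositions of an n-cycle c (i.e. (n-1)-tuples of transpositions whose product is c) is transitive. -/
/-!
Two reduced factorizations of the same permutation `π` into transpositions are Hurwitz
equivalent, by induction on their length. Fix a point `y` moved by `π`. Pushing the last
transposition that moves `y` to the end turns any factorization into one ending in a
transposition `(z y)`. If `z ≠ π⁻¹ y`, the remaining factors multiply to `σ = π (z y)`, which
still moves `y` and has `σ⁻¹ y = π⁻¹ y`, so by induction they can be made to end in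
`(π⁻¹ y, y)`, and one more Hurwitz move brings that transposition to the very end. Hence both
factorizations are equivalent to factorizations ending in `(π⁻¹ y, y)`, whose prefixes are again
reduced and have equal products.

A factorization of an `n`-cycle into `n - 1` transpositions is reduced because the rank of
`σ - 1` on `ℚ^n` is subadditive in `σ`, at most `1` for a transposition, and `n - 1` for an
`n`-cycle.
-/

/-- The `i`-th Hurwitz move on `n`-tuples of elements of a group `G`. -/
def hurwitzMove {G : Type*} [Group G] {n : ℕ} (i : ℕ) (f : Fin n → G) : Fin n → G :=
  fun j =>
    if h1 : (j : ℕ) = i ∧ i + 1 < n then f ⟨i + 1, h1.2⟩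
    else if h2 : (j : ℕ) = i + 1 ∧ i + 1 < n then
      (f ⟨i + 1, h2.2⟩)⁻¹ * f ⟨i, Nat.lt_of_succ_lt h2.2⟩ * f ⟨i + 1, h2.2⟩
    else f j

open Equiv Equiv.Perm

section Group

variable {G : Type*} [Group G]

def HurwitzStep (l l' : List G) : Prop :=
  ∃ (l₁ : List G) (a b : G) (l₂ : List G),
    l = l₁ ++ a :: b :: l₂ ∧ l' = l₁ ++ b :: (b⁻¹ * a * b) :: l₂

abbrev HurwitzEquiv : List G → List G → Prop := Relation.EqvGen HurwitzStep

namespace HurwitzEquiv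

theorem eq_of_forall_step {β : Sort*} (F : List G → β)
    (hF : ∀ l l', HurwitzStep l l' → F l = F l') {l l' : List G} (h : HurwitzEquiv l l') :
    F l = F l' :=
  (InvImage.equivalence _ F eq_equivalence).eqvGen_iff.1 (Relation.EqvGen.mono hF _ _ h)

theorem prod_eq {l l' : List G} (h : HurwitzEquiv l l') : l.prod = l'.prod :=
  h.eq_of_forall_step _ fun _ _ ⟨l₁, a, b, l₂, hl, hl'⟩ => by
    simp only [hl, hl', List.prod_append, List.prod_cons]
    group

theorem length_eq {l l' : List G} (h : HurwitzEquiv l l') : l.length = l'.length :=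
  h.eq_of_forall_step _ fun _ _ ⟨l₁, a, b, l₂, hl, hl'⟩ => by simp [hl, hl']

theorem forall_mem_iff {P : G → Prop} (hP : ∀ a b, P a → P (b⁻¹ * a * b)) {l l' : List G}
    (h : HurwitzEquiv l l') : (∀ x ∈ l, P x) ↔ (∀ x ∈ l', P x) := by
  refine Iff.of_eq (h.eq_of_forall_step (fun l => ∀ x ∈ l, P x) ?_)
  rintro _ _ ⟨l₁, a, b, l₂, rfl, rfl⟩
  have hPa : P (b⁻¹ * a * b) → P a := fun h => by simpa [mul_assoc] using hP _ b⁻¹ h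
  simp only [List.forall_mem_append, List.forall_mem_cons, eq_iff_iff]
  exact ⟨fun ⟨h₁, ha, hb, h₂⟩ => ⟨h₁, hb, hP a b ha, h₂⟩,
    fun ⟨h₁, hb, ha, h₂⟩ => ⟨h₁, hPa ha, hb, h₂⟩⟩

theorem append_right {l l' : List G} (h : HurwitzEquiv l l') (l₃ : List G) :
    HurwitzEquiv (l ++ l₃) (l' ++ l₃) :=
  (InvImage.equivalence _ (· ++ l₃) (Relation.EqvGen.is_equivalence _)).eqvGen_iff.1
    (Relation.EqvGen.mono (fun _ _ ⟨l₁, a, b, l₂, hl, hl'⟩ =>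
      .rel _ _ ⟨l₁, a, b, l₂ ++ l₃, by simp [hl], by simp [hl']⟩) _ _ h)

theorem length_lt_of_append_singleton {l L : List G} {a : G} (h : HurwitzEquiv l (L ++ [a])) :
    L.length < l.length := by
  simp [h.length_eq]

end HurwitzEquiv

theorem hurwitzEquiv_move_to_end (l₁ : List G) (a : G) (l₂ : List G) :
    HurwitzEquiv (l₁ ++ a :: l₂) (l₁ ++ l₂ ++ [l₂.prod⁻¹ * a * l₂.prod]) := by
  induction l₂ generalizing l₁ a with
  | nil => simpa using Relation.EqvGen.refl _
  | cons b l₂ ih =>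
    have step : HurwitzStep (l₁ ++ a :: b :: l₂) ((l₁ ++ [b]) ++ (b⁻¹ * a * b) :: l₂) :=
      ⟨l₁, a, b, l₂, rfl, by simp⟩
    simpa [mul_assoc] using (Relation.EqvGen.rel _ _ step).trans _ _ _ (ih (l₁ ++ [b]) _)

theorem hurwitzEquiv_append_conj_pair (L : List G) (s t : G) :
    HurwitzEquiv (L ++ [s, t]) (L ++ [s * t * s⁻¹, s]) :=
  .symm _ _ <| .rel _ _ ⟨L, s * t * s⁻¹, s, [], rfl, by group⟩

end Group

namespace Equiv.Perm

variable {α : Type*}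

theorem list_prod_apply_of_forall_apply_eq {l : List (Perm α)} {y : α}
    (h : ∀ b ∈ l, b y = y) : l.prod y = y :=
  MulAction.mem_stabilizer_iff.1
    (Subgroup.list_prod_mem _ fun b hb => MulAction.mem_stabilizer_iff.2 (h b hb))

theorem exists_last_apply_ne {l : List (Perm α)} {y : α} (h : l.prod y ≠ y) :
    ∃ l₁ a l₂, l = l₁ ++ a :: l₂ ∧ a y ≠ y ∧ ∀ b ∈ l₂, b y = y := by
  induction l using List.reverseRecOn with
  | nil => simp at h
  | append_singleton l a ih =>
    by_cases ha : a y = y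
    · obtain ⟨l₁, b, l₂, rfl, hb, hl₂⟩ := ih (by simpa [ha] using h)
      exact ⟨l₁, b, l₂ ++ [a], by simp, hb, by simpa [or_imp, forall_and, ha] using hl₂⟩
    · exact ⟨l, a, [], by simp, ha, by simp⟩

section Swaps

variable [DecidableEq α]

theorem IsSwap.conj {a : Perm α} (ha : a.IsSwap) (b : Perm α) : (b⁻¹ * a * b).IsSwap := by
  obtain ⟨u, v, huv, rfl⟩ := ha
  refine ⟨b⁻¹ u, b⁻¹ v, b⁻¹.injective.ne huv, ?_⟩
  rw [swap_apply_apply, inv_inv]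

theorem IsSwap.eq_swap_of_apply_ne {a : Perm α} (ha : a.IsSwap) {y : α} (h : a y ≠ y) :
    a = swap (a y) y := by
  obtain ⟨u, v, -, rfl⟩ := ha
  rcases eq_or_ne y u with rfl | hyu
  · rw [swap_apply_left, swap_comm]
  · rcases eq_or_ne y v with rfl | hyv
    · rw [swap_apply_right]
    · exact absurd (swap_apply_of_ne_of_ne hyu hyv) h

theorem _root_.HurwitzEquiv.forall_isSwap_iff {l l' : List (Perm α)} (h : HurwitzEquiv l l') :
    (∀ t ∈ l, t.IsSwap) ↔ (∀ t ∈ l', t.IsSwap) :=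
  h.forall_mem_iff fun _ b ha => ha.conj b

theorem exists_hurwitzEquiv_append_swap_of_apply_ne (l : List (Perm α))
    (hl : ∀ t ∈ l, t.IsSwap) {y : α} (hy : l.prod y ≠ y) :
    ∃ l' z, HurwitzEquiv l (l' ++ [swap z y]) := by
  obtain ⟨l₁, a, l₂, rfl, hay, hl₂⟩ := exists_last_apply_ne hy
  have hs : l₂.prod⁻¹ y = y := by
    rw [inv_eq_iff_eq, list_prod_apply_of_forall_apply_eq hl₂]
  have hconj : l₂.prod⁻¹ * a * l₂.prod = swap (l₂.prod⁻¹ (a y)) y := by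
    conv_lhs => rw [(hl a (by simp)).eq_swap_of_apply_ne hay]
    rw [← hs, swap_apply_apply, inv_inv, hs]
  exact ⟨l₁ ++ l₂, _, hconj ▸ hurwitzEquiv_move_to_end l₁ a l₂⟩

theorem exists_hurwitzEquiv_append_swap_inv_apply (l : List (Perm α)) (hl : ∀ t ∈ l, t.IsSwap)
    {y : α} (hy : l.prod y ≠ y) : ∃ L, HurwitzEquiv l (L ++ [swap (l.prod⁻¹ y) y]) := by
  induction hn : l.length using Nat.strong_induction_on generalizing l with
  | _ n ih =>
  obtain ⟨l', z, hl'⟩ := exists_hurwitzEquiv_append_swap_of_apply_ne l hl hy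
  set π := l.prod
  by_cases hz : z = π⁻¹ y
  · exact ⟨l', hz ▸ hl'⟩
  have hσ : l'.prod = π * swap z y := by
    simp [π, hl'.prod_eq, mul_assoc]
  have hσy : l'.prod y ≠ y := by
    rwa [hσ, mul_apply, swap_apply_right, Ne, ← eq_inv_iff_eq]
  have hσinv : l'.prod⁻¹ y = π⁻¹ y := by
    rw [hσ, mul_inv_rev, swap_inv, mul_apply]
    exact swap_apply_of_ne_of_ne (Ne.symm hz) fun h => hy (inv_eq_iff_eq.1 h).symm
  have hl'swap : ∀ t ∈ l', t.IsSwap := fun t ht => hl'.forall_isSwap_iff.1 hl t (by simp [ht])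
  obtain ⟨L, hL⟩ := ih _ (hn ▸ hl'.length_lt_of_append_singleton) l' hl'swap hσy rfl
  rw [hσinv] at hL
  refine ⟨L ++ [swap (π⁻¹ y) y * swap z y * (swap (π⁻¹ y) y)⁻¹], ?_⟩
  refine hl'.trans _ _ _ ((hL.append_right _).trans _ _ _ ?_)
  simpa using hurwitzEquiv_append_conj_pair L (swap (π⁻¹ y) y) (swap z y)

def IsReduced (l : List (Perm α)) : Prop :=
  (∀ t ∈ l, t.IsSwap) ∧
    ∀ l' : List (Perm α), (∀ t ∈ l', t.IsSwap) → l'.prod = l.prod →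
      l.length ≤ l'.length

theorem IsReduced.of_hurwitzEquiv_append {l L : List (Perm α)} {τ : Perm α} (hl : IsReduced l)
    (h : HurwitzEquiv l (L ++ [τ])) : IsReduced L := by
  obtain ⟨hLswap, hτ⟩ := List.forall_mem_append.1 (h.forall_isSwap_iff.1 hl.1)
  refine ⟨hLswap, fun l' hl' hprod => ?_⟩
  have hle := hl.2 (l' ++ [τ]) (List.forall_mem_append.2 ⟨hl', hτ⟩)
    (by simp [hprod, h.prod_eq])
  simp only [h.length_eq, List.length_append, List.length_singleton] at hle
  omega

theorem IsReduced.hurwitzEquiv {l l' : List (Perm α)} (hl : IsReduced l) (hl' : IsReduced l')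
    (hprod : l.prod = l'.prod) : HurwitzEquiv l l' := by
  induction hn : l.length using Nat.strong_induction_on generalizing l l' with
  | _ n ih =>
  by_cases hπ : l.prod = 1
  · have hnil : ∀ {k : List (Perm α)}, IsReduced k → k.prod = 1 → k = [] := fun hk hk1 =>
      List.eq_nil_of_length_eq_zero (Nat.le_zero.1 (hk.2 [] (by simp) (by simp [hk1])))
    rw [hnil hl hπ, hnil hl' (hprod ▸ hπ)]
    exact .refl _
  obtain ⟨y, hy⟩ : ∃ y, l.prod y ≠ y := not_forall.1 fun h => hπ (Equiv.ext h)
  obtain ⟨L, hL⟩ := exists_hurwitzEquiv_append_swap_inv_apply l hl.1 hy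
  obtain ⟨L', hL'⟩ := exists_hurwitzEquiv_append_swap_inv_apply l' hl'.1 (hprod ▸ hy)
  rw [← hprod] at hL'
  have hLL' : L.prod = L'.prod := by
    simpa using hL.prod_eq.symm.trans (hprod.trans hL'.prod_eq)
  have hLL'equiv : HurwitzEquiv L L' := ih _ (hn ▸ hL.length_lt_of_append_singleton)
    (hl.of_hurwitzEquiv_append hL) (hl'.of_hurwitzEquiv_append hL') hLL' rfl
  exact hL.trans _ _ _ <| (hLL'equiv.append_right _).trans _ _ _ (hL'.symm _ _)

end Swaps

section Rank

open Module LinearMap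

noncomputable def permRank (σ : Perm α) : ℕ :=
  finrank ℚ (range (funLeft ℚ ℚ σ - LinearMap.id))

theorem permRank_swap_le [DecidableEq α] (x y : α) : permRank (swap x y) ≤ 1 := by
  have hrange : range (funLeft ℚ ℚ ⇑(swap x y) - LinearMap.id) ≤
      Submodule.span ℚ {Pi.single x 1 - Pi.single y 1} := by
    rintro - ⟨v, rfl⟩
    refine Submodule.mem_span_singleton.2 ⟨v y - v x, funext fun i => ?_⟩
    simp only [Pi.smul_apply, Pi.sub_apply, LinearMap.sub_apply, funLeft_apply, id_apply,
      Pi.single_apply, swap_apply_def, smul_eq_mul]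
    split_ifs <;> simp_all
  exact (Submodule.finrank_mono hrange).trans ((finrank_span_le_card _).trans (by simp))

variable [Fintype α]

theorem permRank_mul_le (σ τ : Perm α) : permRank (σ * τ) ≤ permRank σ + permRank τ := by
  have hdecomp : funLeft ℚ ℚ ⇑(σ * τ) - LinearMap.id =
      (funLeft ℚ ℚ τ).comp (funLeft ℚ ℚ σ - LinearMap.id) +
        (funLeft ℚ ℚ τ - LinearMap.id) := by
    ext v i
    simp [funLeft_apply]
  calc permRank (σ * τ)
      ≤ finrank ℚ ↥(range ((funLeft ℚ ℚ τ).comp (funLeft ℚ ℚ σ - LinearMap.id))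
          ⊔ range (funLeft ℚ ℚ τ - LinearMap.id)) :=
        Submodule.finrank_mono (hdecomp ▸ range_add_le _ _)
    _ ≤ finrank ℚ ↥(range ((funLeft ℚ ℚ τ).comp (funLeft ℚ ℚ σ - LinearMap.id)))
          + permRank τ :=
        Submodule.finrank_add_le_finrank_add_finrank _ _
    _ ≤ permRank σ + permRank τ := by
        rw [range_comp]
        exact Nat.add_le_add_right (Submodule.finrank_map_le _ _) _

theorem permRank_prod_le [DecidableEq α] (l : List (Perm α)) (hl : ∀ t ∈ l, t.IsSwap) :
    permRank l.prod ≤ l.length := by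
  induction l with
  | nil =>
    rw [List.prod_nil, List.length_nil, Nat.le_zero, permRank,
      range_eq_bot.2 (by ext; simp), finrank_bot]
  | cons t l ih =>
    obtain ⟨x, y, -, rfl⟩ := hl t (by simp)
    calc permRank (swap x y * l.prod) ≤ permRank (swap x y) + permRank l.prod :=
          permRank_mul_le _ _
      _ ≤ 1 + l.length :=
          Nat.add_le_add (permRank_swap_le x y) (ih fun t ht => hl t (by simp [ht]))
      _ = (swap x y :: l).length := by simp [Nat.add_comm]

theorem IsCycle.card_sub_one_le_permRank [DecidableEq α] {c : Perm α} (hc : c.IsCycle)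
    (hsupp : c.support = Finset.univ) : Fintype.card α - 1 ≤ permRank c := by
  have hmoved : ∀ w, c w ≠ w := fun w => mem_support.1 (hsupp ▸ Finset.mem_univ w)
  have hker : ker (funLeft ℚ ℚ c - LinearMap.id) ≤ Submodule.span ℚ {fun _ => 1} := by
    intro v hv
    have hvc : ∀ w, v (c w) = v w := fun w => by
      simpa [funLeft_apply, sub_eq_zero] using congrFun (mem_ker.1 hv) w
    have hvpow : ∀ (k : ℕ) w, v ((c ^ k) w) = v w := fun k => by
      induction k with
      | zero => simp
      | succ k ih => intro w; rw [pow_succ, mul_apply, ih, hvc]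
    obtain ⟨x, -⟩ := id hc
    have hconst : ∀ w, v w = v x := fun w => by
      obtain ⟨k, hk⟩ := hc.exists_pow_eq (hmoved x) (hmoved w)
      rw [← hk, hvpow]
    exact Submodule.mem_span_singleton.2 ⟨v x, funext fun w => by simp [hconst w]⟩
  have hrankNullity := finrank_range_add_finrank_ker (funLeft ℚ ℚ c - LinearMap.id)
  have hkerRank := (Submodule.finrank_mono hker).trans (finrank_span_le_card _)
  simp only [finrank_fintype_fun_eq_card, Set.toFinset_singleton, Finset.card_singleton]
    at hrankNullity hkerRank
  unfold permRank
  omega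

theorem isReduced_of_isCycle [DecidableEq α] {l : List (Perm α)} (hl : ∀ t ∈ l, t.IsSwap)
    (hlen : l.length = Fintype.card α - 1) (hc : l.prod.IsCycle)
    (hsupp : l.prod.support = Finset.univ) : IsReduced l :=
  ⟨hl, fun l' hl' hprod => hlen ▸ (hc.card_sub_one_le_permRank hsupp).trans
    (hprod ▸ permRank_prod_le l' hl')⟩

end Rank

end Equiv.Perm

section Tuples

variable {G : Type*} [Group G] {m : ℕ}

theorem ofFn_hurwitzMove {i : ℕ} (hi : i + 1 < m) (f : Fin m → G) :
    List.ofFn (hurwitzMove i f) =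
      (List.ofFn f).take i ++ f ⟨i + 1, hi⟩ ::
        ((f ⟨i + 1, hi⟩)⁻¹ * f ⟨i, by omega⟩ * f ⟨i + 1, hi⟩) ::
          (List.ofFn f).drop (i + 2) := by
  refine List.ext_getElem (by simp; omega) fun j _ _ => ?_
  simp only [List.getElem_ofFn, hurwitzMove, List.getElem_append, List.getElem_cons,
    List.getElem_take, List.getElem_drop, List.length_take, List.length_ofFn]
  split_ifs <;> first | omega | (obtain ⟨rfl, -⟩ := ‹_ ∧ _›; rfl) | (congr 2 <;> omega)

theorem hurwitzMove_bijective (i : ℕ) : Function.Bijective (hurwitzMove (G := G) (n := m) i) := by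
  refine Function.bijective_iff_has_inverse.2
    ⟨fun g j => if h : (j : ℕ) = i ∧ i + 1 < m then
        g ⟨i, by omega⟩ * g ⟨i + 1, h.2⟩ * (g ⟨i, by omega⟩)⁻¹
      else if h : (j : ℕ) = i + 1 ∧ i + 1 < m then g ⟨i, by omega⟩ else g j,
      fun f => ?_, fun g => ?_⟩ <;>
  · funext ⟨j, hj⟩
    simp only [hurwitzMove]
    split_ifs <;> (try obtain ⟨rfl, -⟩ := ‹j = _ ∧ _›) <;>
      (try simp only [true_and] at *) <;> first | omega | group

theorem exists_hurwitzMove_of_hurwitzStep {f : Fin m → G} {L : List G}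
    (h : HurwitzStep (List.ofFn f) L) : ∃ i, i + 1 < m ∧ L = List.ofFn (hurwitzMove i f) := by
  obtain ⟨l₁, a, b, l₂, hf, rfl⟩ := h
  have hlen : m = l₁.length + (l₂.length + 2) := by simpa using congrArg List.length hf
  have hget : ∀ k (hk : k < m), f ⟨k, hk⟩ = (l₁ ++ a :: b :: l₂)[k]'(by simp; omega) :=
    fun k hk => by simp only [← hf, List.getElem_ofFn]
  refine ⟨l₁.length, by omega, ?_⟩
  rw [ofFn_hurwitzMove (by omega), hf, hget, hget]
  simp

variable (G m) in
def hurwitzGroup : Subgroup (Perm (Fin m → G)) :=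
  Subgroup.closure {σ | ∃ i : ℕ, i + 1 < m ∧ ⇑σ = hurwitzMove i}

theorem HurwitzEquiv.exists_mem_hurwitzGroup {L L' : List G} (h : HurwitzEquiv L L') :
    ∀ f f' : Fin m → G, L = List.ofFn f → L' = List.ofFn f' →
      ∃ β ∈ hurwitzGroup G m, β f = f' := by
  induction h with
  | rel _ _ hstep =>
    rintro f f' rfl rfl
    obtain ⟨i, hi, hf'⟩ := exists_hurwitzMove_of_hurwitzStep hstep
    exact ⟨.ofBijective _ (hurwitzMove_bijective i), Subgroup.subset_closure ⟨i, hi, rfl⟩,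
      (List.ofFn_injective hf').symm⟩
  | refl =>
    rintro f f' rfl hff'
    exact ⟨1, one_mem _, List.ofFn_injective hff'⟩
  | symm _ _ _ ih =>
    rintro f f' rfl rfl
    obtain ⟨β, hβ, rfl⟩ := ih f' f rfl rfl
    exact ⟨β⁻¹, inv_mem hβ, β.symm_apply_apply f'⟩
  | trans _ y _ hxy _ ih₁ ih₂ =>
    rintro f f' rfl rfl
    have hy : y.length = m := by simpa using (HurwitzEquiv.length_eq hxy).symm
    obtain ⟨g, rfl⟩ : ∃ g : Fin m → G, List.ofFn g = y :=
      ⟨fun j => y[j.1], List.ext_getElem (by simp [hy]) (by simp)⟩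
    obtain ⟨β₁, hβ₁, rfl⟩ := ih₁ f g rfl rfl
    obtain ⟨β₂, hβ₂, rfl⟩ := ih₂ (β₁ f) f' rfl rfl
    exact ⟨β₂ * β₁, mul_mem hβ₂ hβ₁, rfl⟩

end Tuples

/-- The Hurwitz action of `B_{n-1}` on reduced transposition decompositions of an `n`-cycle
in the symmetric group `S_n` is transitive. -/
theorem hurwitz_transitive_on_reduced_decompositions (n : ℕ) (c : Equiv.Perm (Fin n))
    (hc : c.IsCycle) (hsupp : c.support = Finset.univ)
    (t t' : Fin (n - 1) → Equiv.Perm (Fin n))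
    (ht : ∀ i, (t i).IsSwap) (ht' : ∀ i, (t' i).IsSwap)
    (hp : (List.ofFn t).prod = c) (hp' : (List.ofFn t').prod = c) :
    ∃ β ∈ Subgroup.closure
      {σ : Equiv.Perm (Fin (n - 1) → Equiv.Perm (Fin n)) |
        ∃ i : ℕ, i + 1 < n - 1 ∧ ⇑σ = hurwitzMove i},
      β t = t' := by
  have hreduced : ∀ s : Fin (n - 1) → Perm (Fin n), (∀ i, (s i).IsSwap) →
      (List.ofFn s).prod = c → IsReduced (List.ofFn s) := fun s hs hsc =>
    isReduced_of_isCycle (List.forall_mem_ofFn_iff.2 hs) (by simp) (hsc ▸ hc) (hsc ▸ hsupp)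
  exact ((hreduced t ht hp).hurwitzEquiv (hreduced t' ht' hp') (hp.trans hp'.symm))
    |>.exists_mem_hurwitzGroup t t' rfl rfl
end

section
/- Let W = G(d,1,n) be the group of n×n monomial matrices whose nonzero entries are d-th roots of unity, and let π: W → S_n send a monomial matrix to its underlying permutation. If (r_1,…,r_n) is a tuple of reflections of W whose product is the Coxeter element c = ρ_{1,ζ_d} τ_{1,2} τ_{2,3} ⋯ τ_{n-1,n}, then exactly one of the r_i is a diagonal (long) reflection, and the images under π of the remaining n−1 reflections form a reduced transposition decomposition of the n-cycle π(c). -/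
/-!
The product of the nonzero entries is a character of `G(d,1,n)` that is trivial on short
reflections and sends `c` to `ζ_d ≠ 1`, so some `r_i` is long. Under `π`, long reflections
become trivial and short ones become transpositions, with product the `n`-cycle `π(c)`. On `Kⁿ`,
codimensions of fixed spaces of permutations are subadditive, a transposition fixes a hyperplane,
and an `n`-cycle fixes only the constants; so at least `n - 1` of the `n` factors are
transpositions, which leaves room for a single long reflection.
-/

open Equiv SemidirectProduct

/-- The permutation action of `S_n` on `n`-tuples of `d`-th roots of unity
(written multiplicatively as `Multiplicative (ZMod d)`). -/
def permHom (d n : ℕ) :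
    Equiv.Perm (Fin n) →* MulAut (Fin n → Multiplicative (ZMod d)) where
  toFun σ :=
    { toFun := fun f => f ∘ ⇑σ.symm
      invFun := fun f => f ∘ ⇑σ
      left_inv := fun f => by funext x; simp
      right_inv := fun f => by funext x; simp
      map_mul' := fun f g => rfl }
  map_one' := by
    ext f x
    rfl
  map_mul' σ τ := by
    ext f x
    simp [Equiv.Perm.mul_def]

/-- The group `G(d,1,n)` of `n×n` monomial matrices whose nonzero entries are `d`-th roots
of unity, realized as the wreath product `μ_d ≀ S_n`. -/
abbrev Gd1n (d n : ℕ) : Type :=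
  SemidirectProduct (Fin n → Multiplicative (ZMod d)) (Equiv.Perm (Fin n)) (permHom d n)

/-- The long (diagonal) reflection `ρ_{i,ζ}` (a reflection when `ζ ≠ 1`). -/
def longRefl (d n : ℕ) (i : Fin n) (ζ : Multiplicative (ZMod d)) : Gd1n d n :=
  SemidirectProduct.inl (Pi.mulSingle i ζ)

/-- The short reflection `τ_{i,j}^ζ = ρ_{i,ζ}⁻¹ τ_{i,j} ρ_{i,ζ}`. -/
def shortRefl (d n : ℕ) (i j : Fin n) (ζ : Multiplicative (ZMod d)) : Gd1n d n :=
  (longRefl d n i ζ)⁻¹ * SemidirectProduct.inr (Equiv.swap i j) * longRefl d n i ζ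

/-- Predicate: `g` is a long (diagonal) reflection. -/
def IsLongRefl {d n : ℕ} (g : Gd1n d n) : Prop :=
  ∃ (i : Fin n) (ζ : Multiplicative (ZMod d)), ζ ≠ 1 ∧ g = longRefl d n i ζ

/-- Predicate: `g` is a short reflection. -/
def IsShortRefl {d n : ℕ} (g : Gd1n d n) : Prop :=
  ∃ (i j : Fin n) (ζ : Multiplicative (ZMod d)), i ≠ j ∧ g = shortRefl d n i j ζ

/-- The Coxeter element `c = ρ_{1,ζ_d} τ_{1,2} τ_{2,3} ⋯ τ_{n-1,n}` of `G(d,1,n)`. -/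
def coxG (d n : ℕ) (hn : 0 < n) : Gd1n d n :=
  longRefl d n ⟨0, hn⟩ (Multiplicative.ofAdd (1 : ZMod d)) *
    (List.ofFn fun i : Fin (n - 1) =>
      (SemidirectProduct.inr
        (Equiv.swap ⟨(i : ℕ), Nat.lt_of_lt_of_le i.isLt (Nat.sub_le n 1)⟩
          ⟨(i : ℕ) + 1, by have := i.isLt; omega⟩) : Gd1n d n)).prod

open Finset

section FixedSpace

variable {α : Type*} (K : Type*) [Field K]

def fixedSpace (σ : Perm α) : Submodule K (α → K) where
  carrier := {v | ∀ x, v (σ x) = v x}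
  add_mem' hv hw x := by simp [hv x, hw x]
  zero_mem' _ := rfl
  smul_mem' c v hv x := by simp [hv x]

variable {K}

@[simp]
lemma mem_fixedSpace {σ : Perm α} {v : α → K} : v ∈ fixedSpace K σ ↔ ∀ x, v (σ x) = v x :=
  Iff.rfl

lemma fixedSpace_one : fixedSpace K (1 : Perm α) = ⊤ := by
  ext v
  simp

lemma fixedSpace_inf_le_mul (σ τ : Perm α) :
    fixedSpace K σ ⊓ fixedSpace K τ ≤ fixedSpace K (σ * τ) := by
  rintro v ⟨hσ, hτ⟩ x
  rw [Perm.mul_apply, hσ, hτ]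

variable [Fintype α]

lemma card_le_finrank_fixedSpace_swap_add_one [DecidableEq α] (a b : α) :
    Fintype.card α ≤ Module.finrank K (fixedSpace K (swap a b)) + 1 := by
  let f : (α → K) →ₗ[K] K := LinearMap.proj (R := K) (φ := fun _ : α => K) a - LinearMap.proj b
  have hker : LinearMap.ker f ≤ fixedSpace K (swap a b) := by
    intro v hv x
    have hab : v a = v b := sub_eq_zero.mp hv
    rcases eq_or_ne x a with rfl | hxa
    · rw [swap_apply_left, hab]
    rcases eq_or_ne x b with rfl | hxb
    · rw [swap_apply_right, hab]
    · rw [swap_apply_of_ne_of_ne hxa hxb]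
  have hrange : Module.finrank K (LinearMap.range f) ≤ 1 :=
    (Submodule.finrank_le _).trans (Module.finrank_self K).le
  have := LinearMap.finrank_range_add_finrank_ker f
  have := Submodule.finrank_mono hker
  simp only [Module.finrank_fintype_fun_eq_card] at *
  omega

lemma finrank_fixedSpace_le_one {σ : Perm α} (hσ : ∀ x y, σ.SameCycle x y) :
    Module.finrank K (fixedSpace K σ) ≤ 1 := by
  classical
  cases isEmpty_or_nonempty α with
  | inl _ => simp [Module.finrank_zero_of_subsingleton]
  | inr h =>
    obtain ⟨x₀⟩ := h
    have hconst : ∀ v ∈ fixedSpace K σ, v = v x₀ • fun _ => 1 := by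
      intro v hv
      funext y
      obtain ⟨k, -, -, rfl⟩ := (hσ x₀ y).exists_pow_eq
      induction k with
      | zero => simp
      | succ k ih => simpa [pow_succ', hv _] using ih
    calc Module.finrank K (fixedSpace K σ)
        ≤ Module.finrank K (Submodule.span K {fun _ : α => (1 : K)}) :=
          Submodule.finrank_mono fun v hv =>
            (hconst v hv).symm ▸ Submodule.smul_mem _ _ (Submodule.mem_span_singleton_self _)
      _ ≤ 1 := by simpa using finrank_span_le_card (R := K) {fun _ : α => (1 : K)}

end FixedSpace

section Transpositions

variable {α : Type*} [Fintype α] [DecidableEq α]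

lemma card_le_finrank_fixedSpace_prod_add_card_ne_one (K : Type*) [Field K] {m : ℕ}
    (f : Fin m → Perm α) (hf : ∀ i, f i = 1 ∨ (f i).IsSwap) :
    Fintype.card α ≤
      Module.finrank K (fixedSpace K (List.ofFn f).prod) + #{i | f i ≠ 1} := by
  induction m with
  | zero => rw [List.ofFn_zero, List.prod_nil, fixedSpace_one, finrank_top]; simp
  | succ m ih =>
    have ih := ih (fun i => f i.succ) fun i => hf i.succ
    beta_reduce at ih
    rw [List.ofFn_succ, List.prod_cons, Fin.card_filter_univ_succ]
    set τ := (List.ofFn fun i => f i.succ).prod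
    by_cases h1 : f 0 = 1
    · rw [h1, one_mul, if_neg (not_not.mpr rfl)]
      exact ih
    obtain ⟨a, b, -, hab⟩ := (hf 0).resolve_left h1
    have hinf := Submodule.finrank_sup_add_finrank_inf_eq (fixedSpace K (f 0)) (fixedSpace K τ)
    have hsup := Submodule.finrank_le (fixedSpace K (f 0) ⊔ fixedSpace K τ)
    have hmul := Submodule.finrank_mono (fixedSpace_inf_le_mul (K := K) (f 0) τ)
    have hswap := card_le_finrank_fixedSpace_swap_add_one (K := K) a b
    rw [← hab] at hswap
    simp only [Module.finrank_fintype_fun_eq_card] at hsup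
    rw [if_pos h1]
    omega

lemma card_le_card_ne_one_add_one_of_sameCycle {m : ℕ} (f : Fin m → Perm α)
    (hf : ∀ i, f i = 1 ∨ (f i).IsSwap) (htrans : ∀ x y, (List.ofFn f).prod.SameCycle x y) :
    Fintype.card α ≤ #{i | f i ≠ 1} + 1 := by
  have := card_le_finrank_fixedSpace_prod_add_card_ne_one ℚ f hf
  have := finrank_fixedSpace_le_one (K := ℚ) htrans
  omega

lemma subsingleton_setOf_eq_one_of_sameCycle {m : ℕ} (hm : Fintype.card α = m)
    (f : Fin m → Perm α) (hf : ∀ i, f i = 1 ∨ (f i).IsSwap)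
    (htrans : ∀ x y, (List.ofFn f).prod.SameCycle x y) : {i | f i = 1}.Subsingleton := by
  intro i hi j hj
  by_contra hne
  have hsub : ({k | f k ≠ 1} : Finset (Fin m)) ⊆ univ \ {i, j} := by
    intro k hk
    simp only [mem_filter, mem_univ, true_and] at hk
    simp only [mem_sdiff, mem_univ, mem_insert, mem_singleton, true_and]
    rintro (rfl | rfl) <;> contradiction
  have := card_le_card hsub
  have := card_le_univ {i, j}
  have := card_le_card_ne_one_add_one_of_sameCycle f hf htrans
  rw [card_univ_sdiff, card_pair hne, Fintype.card_fin] at *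
  omega

end Transpositions

section AdjacentSwaps

def adjacentSwapsProd (n m : ℕ) (hm : m < n) : Perm (Fin n) :=
  (List.ofFn fun i : Fin m => swap (⟨i, by omega⟩ : Fin n) ⟨i + 1, by omega⟩).prod

lemma adjacentSwapsProd_succ {n m : ℕ} (hm : m + 1 < n) :
    adjacentSwapsProd n (m + 1) hm =
      adjacentSwapsProd n m (by omega) * swap ⟨m, by omega⟩ ⟨m + 1, hm⟩ := by
  rw [adjacentSwapsProd, List.ofFn_succ', List.prod_concat]
  rfl

lemma adjacentSwapsProd_apply_of_gt {n m : ℕ} (hm : m < n) (x : Fin n) (hx : m < x) :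
    adjacentSwapsProd n m hm x = x := by
  induction m with
  | zero => rfl
  | succ m ih =>
    rw [adjacentSwapsProd_succ, Perm.mul_apply, swap_apply_of_ne_of_ne, ih] <;> grind

lemma val_adjacentSwapsProd_apply {n m : ℕ} (hm : m < n) (x : Fin n) (hx : x < m) :
    (adjacentSwapsProd n m hm x : ℕ) = x + 1 := by
  induction m with
  | zero => omega
  | succ m ih =>
    rw [adjacentSwapsProd_succ, Perm.mul_apply]
    rcases (Nat.lt_succ_iff.mp hx).lt_or_eq with hx | rfl
    · rw [swap_apply_of_ne_of_ne, ih] <;> grind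
    · rw [swap_apply_left, adjacentSwapsProd_apply_of_gt]
      simp

lemma sameCycle_adjacentSwapsProd {n : ℕ} (hn : 0 < n) (x y : Fin n) :
    (adjacentSwapsProd n (n - 1) (by omega)).SameCycle x y := by
  suffices h : ∀ k (hk : k < n),
      (adjacentSwapsProd n (n - 1) (by omega)).SameCycle ⟨0, hn⟩ ⟨k, hk⟩ from
    (h x x.isLt).symm.trans (h y y.isLt)
  intro k hk
  induction k with
  | zero => rfl
  | succ k ih =>
    have hσ : adjacentSwapsProd n (n - 1) (by omega) ⟨k, by omega⟩ = ⟨k + 1, hk⟩ :=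
      Fin.ext (val_adjacentSwapsProd_apply _ _ (by simp; omega))
    rw [← hσ]
    exact Perm.sameCycle_apply_right.mpr (ih (by omega))

end AdjacentSwaps

section Reflections

variable {d n : ℕ}

def colorHom (d n : ℕ) : Gd1n d n →* Multiplicative (ZMod d) where
  toFun g := ∏ j, g.left j
  map_one' := by simp
  map_mul' g h := by
    simp only [SemidirectProduct.mul_left, Pi.mul_apply, Finset.prod_mul_distrib]
    congr 1
    exact Equiv.prod_comp g.right.symm h.left

lemma colorHom_inr (σ : Perm (Fin n)) : colorHom d n (inr σ) = 1 := by
  simp [colorHom]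

lemma colorHom_longRefl (i : Fin n) (ζ : Multiplicative (ZMod d)) :
    colorHom d n (longRefl d n i ζ) = ζ := by
  simp [colorHom, longRefl]

lemma colorHom_shortRefl (i j : Fin n) (ζ : Multiplicative (ZMod d)) :
    colorHom d n (shortRefl d n i j ζ) = 1 := by
  simp [shortRefl, colorHom_inr]

lemma rightHom_longRefl (i : Fin n) (ζ : Multiplicative (ZMod d)) :
    rightHom (longRefl d n i ζ) = 1 :=
  rightHom_inl _

lemma rightHom_shortRefl (i j : Fin n) (ζ : Multiplicative (ZMod d)) :
    rightHom (shortRefl d n i j ζ) = swap i j := by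
  rw [shortRefl, map_mul, map_mul, map_inv, rightHom_longRefl, rightHom_inr, inv_one, one_mul,
    mul_one]

lemma coxG_eq (hn : 0 < n) :
    coxG d n hn =
      longRefl d n ⟨0, hn⟩ (.ofAdd 1) * inr (adjacentSwapsProd n (n - 1) (by omega)) := by
  rw [coxG, adjacentSwapsProd, map_list_prod, List.map_ofFn]
  rfl

lemma colorHom_coxG (hn : 0 < n) : colorHom d n (coxG d n hn) = .ofAdd 1 := by
  rw [coxG_eq, map_mul, colorHom_longRefl, colorHom_inr, mul_one]

lemma rightHom_coxG (hn : 0 < n) :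
    rightHom (coxG d n hn) = adjacentSwapsProd n (n - 1) (by omega) := by
  rw [coxG_eq, map_mul, rightHom_longRefl, rightHom_inr, one_mul]

lemma IsLongRefl.rightHom_eq_one {g : Gd1n d n} (hg : IsLongRefl g) : rightHom g = 1 := by
  obtain ⟨i, ζ, -, rfl⟩ := hg
  exact rightHom_longRefl i ζ

lemma IsShortRefl.isSwap_rightHom {g : Gd1n d n} (hg : IsShortRefl g) : (rightHom g).IsSwap := by
  obtain ⟨i, j, ζ, hij, rfl⟩ := hg
  exact ⟨i, j, hij, rightHom_shortRefl i j ζ⟩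

lemma IsShortRefl.colorHom_eq_one {g : Gd1n d n} (hg : IsShortRefl g) : colorHom d n g = 1 := by
  obtain ⟨i, j, ζ, -, rfl⟩ := hg
  exact colorHom_shortRefl i j ζ

lemma exists_isLongRefl_of_prod_eq_coxG (hd : 2 ≤ d) (hn : 0 < n) {m : ℕ}
    (r : Fin m → Gd1n d n) (hrefl : ∀ i, IsLongRefl (r i) ∨ IsShortRefl (r i))
    (hprod : (List.ofFn r).prod = coxG d n hn) :
    ∃ i, IsLongRefl (r i) := by
  by_contra! hshort
  have hcolor : colorHom d n (List.ofFn r).prod = 1 := by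
    rw [map_list_prod, List.map_ofFn]
    exact List.prod_eq_one <| by
      simpa using fun i => ((hrefl i).resolve_left (hshort i)).colorHom_eq_one
  have : Fact (1 < d) := ⟨hd⟩
  rw [hprod, colorHom_coxG] at hcolor
  exact one_ne_zero (ofAdd_eq_one.mp hcolor)

end Reflections

/-- If a tuple `(r_1,…,r_n)` of reflections of `G(d,1,n)` has product the Coxeter element
`c`, then exactly one `r_i` is a long (diagonal) reflection, and the images under
`π : G(d,1,n) → S_n` of the remaining `n-1` (short) reflections are transpositions whose
ordered product is the `n`-cycle `π(c)`. -/
theorem reflection_decompositions_of_coxeter_Gd1n (d n : ℕ) (hd : 2 ≤ d) (hn : 0 < n)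
    (r : Fin n → Gd1n d n)
    (hrefl : ∀ i, IsLongRefl (r i) ∨ IsShortRefl (r i))
    (hprod : (List.ofFn r).prod = coxG d n hn) :
    ∃ i0 : Fin n, IsLongRefl (r i0) ∧ (∀ i, IsLongRefl (r i) → i = i0) ∧
      (∀ i, i ≠ i0 → (SemidirectProduct.rightHom (r i)).IsSwap) ∧
      SemidirectProduct.rightHom (r i0) = 1 ∧
      (List.ofFn fun i => SemidirectProduct.rightHom (r i)).prod =
        SemidirectProduct.rightHom (coxG d n hn) := by
  have hπ : (List.ofFn fun i => rightHom (r i)).prod = rightHom (coxG d n hn) := by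
    rw [← hprod, map_list_prod, List.map_ofFn]
    rfl
  have hfew : {i | rightHom (r i) = 1}.Subsingleton :=
    subsingleton_setOf_eq_one_of_sameCycle (Fintype.card_fin n) _
      (fun i => (hrefl i).imp IsLongRefl.rightHom_eq_one IsShortRefl.isSwap_rightHom)
      (by rw [hπ, rightHom_coxG]; exact sameCycle_adjacentSwapsProd hn)
  obtain ⟨i0, hi0⟩ := exists_isLongRefl_of_prod_eq_coxG hd hn r hrefl hprod
  have huniq : ∀ i, IsLongRefl (r i) → i = i0 := fun i hi =>
    hfew hi.rightHom_eq_one hi0.rightHom_eq_one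
  refine ⟨i0, hi0, huniq, fun i hi => ?_, hi0.rightHom_eq_one, hπ⟩
  exact ((hrefl i).resolve_left (mt (huniq i) hi)).isSwap_rightHom
end

section
/- The subspace E_n^gen of the space of configurations of n distinct points in C with pairwise distinct real parts, modulo nothing (i.e. as a subspace of unordered configurations), is contractible. -/
/-!
Every configuration with pairwise distinct real parts has exactly one labelling in which the
real parts increase, so `E_n^gen` is homeomorphic to the set of increasingly labelled tuples in
`ℂⁿ`, which is nonempty and convex. Since that set is open, the sorting permutation is locally
constant, and this is what makes sorting continuous.
-/

/-- Ordered configurations of `n` points of `ℂ` with pairwise distinct real parts. -/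
abbrev OrderedGen (n : ℕ) : Type :=
  {f : Fin n → ℂ // ∀ i j : Fin n, i ≠ j → (f i).re ≠ (f j).re}

/-- Two ordered configurations are equivalent iff they differ by a permutation of the
indices; the quotient is the space `E_n^gen` of unordered configurations of `n` points
with pairwise distinct real parts. -/
def genSetoid (n : ℕ) : Setoid (OrderedGen n) where
  r f g := ∃ σ : Equiv.Perm (Fin n), f.1 = g.1 ∘ σ
  iseqv := by
    constructor
    · intro f; exact ⟨Equiv.refl _, rfl⟩
    · rintro f g ⟨σ, hσ⟩
      refine ⟨σ.symm, funext fun x => ?_⟩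
      simp [hσ]
    · rintro f g h ⟨σ, hσ⟩ ⟨τ, hτ⟩
      refine ⟨σ.trans τ, funext fun x => ?_⟩
      simp [hσ, hτ]

namespace Tuple

variable {α : Type*} [LinearOrder α] {n : ℕ} {f : Fin n → α}

theorem eq_sort_of_strictMono {σ : Equiv.Perm (Fin n)} (h : StrictMono (f ∘ σ)) :
    σ = sort f :=
  eq_sort_iff.2 ⟨h.monotone, fun _ _ hij he => absurd (h.injective he) hij.ne⟩

theorem strictMono_comp_sort (hf : Function.Injective f) : StrictMono (f ∘ sort f) :=
  (monotone_sort f).strictMono_of_injective (hf.comp (sort f).injective)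

end Tuple

open Topology

variable {n : ℕ}

def sortedConfigs (n : ℕ) : Set (Fin n → ℂ) := {g | StrictMono fun i => (g i).re}

theorem convex_sortedConfigs : Convex ℝ (sortedConfigs n) := by
  intro x hx y hy a b ha hb hab
  rcases ha.eq_or_lt with rfl | ha
  · simpa [show b = 1 by linarith] using hy
  have hcomb : StrictMono fun i => a * (x i).re + b * (y i).re :=
    (hx.const_mul ha).add_monotone (hy.monotone.const_mul hb)
  simpa [sortedConfigs] using hcomb

theorem nonempty_sortedConfigs : (sortedConfigs n).Nonempty :=
  ⟨fun i => (i : ℕ), fun i j hij => by simpa using hij⟩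

theorem isOpen_sortedConfigs : IsOpen (sortedConfigs n) := by
  simp only [sortedConfigs, StrictMono, Set.ofPred_forall]
  exact isOpen_iInter_of_finite fun i => isOpen_iInter_of_finite fun j =>
    isOpen_iInter_of_finite fun _ => isOpen_lt (by fun_prop) (by fun_prop)

noncomputable def sortPerm (f : Fin n → ℂ) : Equiv.Perm (Fin n) :=
  Tuple.sort fun i => (f i).re

theorem eq_sortPerm_of_comp_mem {f : Fin n → ℂ} {σ : Equiv.Perm (Fin n)}
    (h : f ∘ σ ∈ sortedConfigs n) : σ = sortPerm f :=
  Tuple.eq_sort_of_strictMono h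

theorem sortPerm_eventuallyEq {f₀ : Fin n → ℂ}
    (h₀ : f₀ ∘ sortPerm f₀ ∈ sortedConfigs n) : ∀ᶠ f in 𝓝 f₀, sortPerm f = sortPerm f₀ := by
  have hcont : Continuous fun f : Fin n → ℂ => f ∘ sortPerm f₀ := by fun_prop
  filter_upwards [hcont.continuousAt.preimage_mem_nhds (isOpen_sortedConfigs.mem_nhds h₀)]
    with f hf using (eq_sortPerm_of_comp_mem hf).symm

namespace OrderedGen

theorem comp_sortPerm_mem (f : OrderedGen n) : f.1 ∘ sortPerm f.1 ∈ sortedConfigs n :=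
  Tuple.strictMono_comp_sort fun i j h => by_contra fun hij => f.2 i j hij h

noncomputable def sort (f : OrderedGen n) : sortedConfigs n :=
  ⟨f.1 ∘ sortPerm f.1, f.comp_sortPerm_mem⟩

def ofSorted (g : sortedConfigs n) : OrderedGen n :=
  ⟨g.1, fun _ _ hij hre => hij (g.2.injective hre)⟩

theorem sort_ofSorted (g : sortedConfigs n) : (ofSorted g).sort = g := by
  have h1 : (1 : Equiv.Perm (Fin n)) = sortPerm g.1 := eq_sortPerm_of_comp_mem g.2
  ext1
  simp [sort, ofSorted, ← h1]

theorem sort_eq_of_rel {f g : OrderedGen n} (h : genSetoid n f g) : f.sort = g.sort := by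
  obtain ⟨σ, hσ⟩ := h
  have hperm : σ * sortPerm f.1 = sortPerm g.1 := by
    apply eq_sortPerm_of_comp_mem
    simpa [hσ, Function.comp_assoc] using f.comp_sortPerm_mem
  ext1
  simp [sort, hσ, ← hperm, Function.comp_assoc]

theorem continuous_sort : Continuous (sort (n := n)) := by
  refine continuous_induced_rng.2 (continuous_iff_continuousAt.2 fun f₀ => ?_)
  have hconst : ∀ᶠ f in 𝓝 f₀, sortPerm f.1 = sortPerm f₀.1 :=
    continuous_subtype_val.continuousAt.eventually
      (sortPerm_eventuallyEq f₀.comp_sortPerm_mem)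
  have hcont : Continuous fun f : OrderedGen n => f.1 ∘ sortPerm f₀.1 :=
    (continuous_pi fun _ => continuous_apply _).comp continuous_subtype_val
  refine hcont.continuousAt.congr_of_eventuallyEq ?_
  filter_upwards [hconst] with f hf
  simp [sort, hf]

end OrderedGen

noncomputable def quotientHomeomorphSortedConfigs (n : ℕ) :
    Quotient (genSetoid n) ≃ₜ sortedConfigs n where
  toFun := Quotient.lift OrderedGen.sort fun _ _ => OrderedGen.sort_eq_of_rel
  invFun g := ⟦OrderedGen.ofSorted g⟧
  left_inv := Quotient.ind fun f => Quotient.sound ⟨sortPerm f.1, rfl⟩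
  right_inv := OrderedGen.sort_ofSorted
  continuous_toFun := OrderedGen.continuous_sort.quotient_lift _
  continuous_invFun := continuous_quotient_mk'.comp (continuous_subtype_val.subtype_mk _)

/-- The space `E_n^gen` of unordered configurations of `n` distinct points of `ℂ` with
pairwise distinct real parts is contractible. -/
theorem Egen_contractible (n : ℕ) :
    ContractibleSpace (Quotient (genSetoid n)) :=
  haveI := (convex_sortedConfigs (n := n)).contractibleSpace nonempty_sortedConfigs
  (quotientHomeomorphSortedConfigs n).contractibleSpace
end

section
/- Let c be an n-cycle in S_n and T the set of transpositions, with absolute length l_T. Then the intersection of the cyclic subgroup ⟨c⟩ with the interval [1,c] = {w : l_T(w) + l_T(w^{-1}c) = l_T(c)} is exactly {1, c}. -/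
/-- The absolute length of a permutation: the minimal number of transpositions needed to
write it as a product. -/
noncomputable def swapLen (n : ℕ) (σ : Equiv.Perm (Fin n)) : ℕ :=
  sInf {k | ∃ l : List (Equiv.Perm (Fin n)),
    (∀ x ∈ l, x.IsSwap) ∧ l.length = k ∧ l.prod = σ}

/-!
The subspace of vectors in `K^α` fixed by a permutation `σ` has dimension the number of cycles
of `σ`; we only need that it loses at most one dimension under multiplication by a
transposition, so that a product of `k` transpositions fixes a subspace of dimension at least
`|α| - k`. For an `n`-cycle `c`, the vectors fixed by `c ^ m` are fixed by `c ^ gcd(n, m)`, and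
these are determined by their values on `gcd(n, m)` consecutive points of the cycle. Since
`gcd(n, m) ≤ n / 2` unless `c ^ m = 1`, every nontrivial element of `⟨c⟩` has absolute length at
least `n / 2`. So if `w` and `w⁻¹ c` were both nontrivial, their lengths would add up to at
least `n > n - 1 ≥ l_T(c)`.
-/

open Equiv Equiv.Perm Module Finset Subgroup

lemma pow_gcd_orderOf_mem_zpowers_zpow {G : Type*} [Group G] (x : G) (m : ℤ) :
    x ^ Int.gcd (orderOf x) m ∈ zpowers (x ^ m) := by
  refine mem_zpowers_iff.mpr ⟨Int.gcdB (orderOf x) m, ?_⟩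
  rw [← zpow_mul, ← zpow_natCast x (Int.gcd _ _), Int.gcd_eq_gcd_ab, zpow_add,
    zpow_mul x (orderOf x : ℤ), zpow_natCast, pow_orderOf_eq_one, one_zpow, one_mul]

namespace Equiv.Perm

variable {α : Type*}

section Semiring

variable (K : Type*) [Semiring K]

def fixedVectors (σ : Perm α) : Submodule K (α → K) where
  carrier := {v | ∀ x, v (σ x) = v x}
  add_mem' hv hw x := by simp [hv x, hw x]
  zero_mem' _ := rfl
  smul_mem' a v hv x := by simp [hv x]

variable {K}

@[simp]
lemma mem_fixedVectors {σ : Perm α} {v : α → K} : v ∈ fixedVectors K σ ↔ ∀ x, v (σ x) = v x :=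
  Iff.rfl

lemma fixedVectors_inf_le_mul (σ τ : Perm α) :
    fixedVectors K σ ⊓ fixedVectors K τ ≤ fixedVectors K (σ * τ) := by
  rintro v ⟨hσ, hτ⟩ x
  rw [mul_apply, hσ, hτ]

lemma fixedVectors_le_of_mem_zpowers {σ τ : Perm α} (h : τ ∈ zpowers σ) :
    fixedVectors K σ ≤ fixedVectors K τ := by
  obtain ⟨m, rfl⟩ := h
  intro v hv
  induction m using Int.induction_on with
  | zero => simp
  | succ m ih =>
    intro x
    beta_reduce at ih ⊢
    rw [zpow_add_one, mul_apply]
    exact (ih (σ x)).trans (hv x)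
  | pred m ih =>
    intro x
    beta_reduce at ih ⊢
    rw [zpow_sub_one, mul_apply]
    exact (ih (σ⁻¹ x)).trans (by simpa using (hv (σ⁻¹ x)).symm)

end Semiring

variable {K : Type*} [DivisionRing K] [Fintype α]

lemma card_le_finrank_fixedVectors_swap_add_one [DecidableEq α] (a b : α) :
    Fintype.card α ≤ finrank K (fixedVectors K (swap a b)) + 1 := by
  let φ : (α → K) →ₗ[K] K := LinearMap.proj (R := K) (φ := fun _ => K) a - LinearMap.proj b
  have hker : LinearMap.ker φ ≤ fixedVectors K (swap a b) := by
    intro v (hv : v a - v b = 0)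
    rw [sub_eq_zero] at hv
    intro x
    rcases eq_or_ne x a with rfl | hxa
    · simp [hv]
    rcases eq_or_ne x b with rfl | hxb
    · simp [hv]
    · rw [swap_apply_of_ne_of_ne hxa hxb]
  have hrange : finrank K (LinearMap.range φ) ≤ 1 := by
    simpa using (LinearMap.range φ).finrank_le
  have hrank := LinearMap.finrank_range_add_finrank_ker φ
  have hmono := Submodule.finrank_mono hker
  rw [finrank_fintype_fun_eq_card] at hrank
  omega

lemma card_le_finrank_fixedVectors_prod_add_length [DecidableEq α] (l : List (Perm α))
    (hl : ∀ τ ∈ l, τ.IsSwap) :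
    Fintype.card α ≤ finrank K (fixedVectors K l.prod) + l.length := by
  induction l with
  | nil =>
    have : fixedVectors K (1 : Perm α) = ⊤ := by ext; simp
    rw [List.prod_nil, this, finrank_top, finrank_fintype_fun_eq_card]
    simp
  | cons τ l ih =>
    obtain ⟨a, b, -, rfl⟩ := hl τ List.mem_cons_self
    have hl' := ih fun τ hτ => hl τ (List.mem_cons_of_mem _ hτ)
    have hswap := card_le_finrank_fixedVectors_swap_add_one (K := K) a b
    have hinf := Submodule.finrank_sup_add_finrank_inf_eq
      (fixedVectors K (swap a b)) (fixedVectors K l.prod)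
    have hsup := (fixedVectors K (swap a b) ⊔ fixedVectors K l.prod).finrank_le
    have hmul := Submodule.finrank_mono (fixedVectors_inf_le_mul (K := K) (swap a b) l.prod)
    rw [finrank_fintype_fun_eq_card] at hsup
    rw [List.prod_cons, List.length_cons]
    omega

lemma finrank_fixedVectors_le_card {σ : Perm α} (s : Finset α)
    (hs : ∀ x, ∃ y ∈ s, ∃ k : ℕ, (σ ^ k) y = x) :
    finrank K (fixedVectors K σ) ≤ #s := by
  let restrict : fixedVectors K σ →ₗ[K] (s → K) :=
    (LinearMap.funLeft K K Subtype.val).comp (fixedVectors K σ).subtype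
  have hinj : Function.Injective restrict := by
    rw [← LinearMap.ker_eq_bot, LinearMap.ker_eq_bot']
    rintro ⟨v, hv⟩ hv0
    ext x
    obtain ⟨y, hy, k, rfl⟩ := hs x
    have hpow := fixedVectors_le_of_mem_zpowers (K := K) (npow_mem_zpowers σ k) hv
    simpa [restrict, LinearMap.funLeft_apply, hpow y] using congrFun hv0 ⟨y, hy⟩
  simpa using LinearMap.finrank_le_finrank_of_injective hinj

lemma IsCycle.finrank_fixedVectors_pow_le [DecidableEq α] {c : Perm α} (hc : c.IsCycle)
    (hsupp : c.support = univ) {g : ℕ} (hg : 0 < g) :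
    finrank K (fixedVectors K (c ^ g)) ≤ g := by
  obtain ⟨x₀, -⟩ := id hc
  have hmoves : ∀ x, c x ≠ x := fun x => mem_support.mp (hsupp ▸ mem_univ x)
  calc finrank K (fixedVectors K (c ^ g))
      ≤ #((range g).image fun i => (c ^ i) x₀) := by
        refine finrank_fixedVectors_le_card _ fun x => ?_
        obtain ⟨m, rfl⟩ := hc.exists_pow_eq (hmoves x₀) (hmoves x)
        refine ⟨(c ^ (m % g)) x₀, mem_image_of_mem _ (mem_range.mpr (Nat.mod_lt m hg)), m / g, ?_⟩
        rw [← mul_apply, ← pow_mul, ← pow_add, Nat.div_add_mod]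
    _ ≤ g := card_image_le.trans (card_range g).le

lemma IsCycle.orderOf_eq_card [DecidableEq α] {c : Perm α} (hc : c.IsCycle)
    (hsupp : c.support = univ) : orderOf c = Fintype.card α := by
  rw [hc.orderOf, hsupp, card_univ]

lemma IsCycle.finrank_fixedVectors_zpow_le_gcd [DecidableEq α] {c : Perm α} (hc : c.IsCycle)
    (hsupp : c.support = univ) (m : ℤ) :
    finrank K (fixedVectors K (c ^ m)) ≤ Int.gcd (Fintype.card α) m := by
  have horder := hc.orderOf_eq_card hsupp
  have hcard : Fintype.card α ≠ 0 := horder ▸ (orderOf_pos c).ne'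
  have hgcd : 0 < Int.gcd (Fintype.card α) m :=
    Int.gcd_pos_of_ne_zero_left _ (by exact_mod_cast hcard)
  calc finrank K (fixedVectors K (c ^ m))
      ≤ finrank K (fixedVectors K (c ^ Int.gcd (Fintype.card α) m)) := by
        refine Submodule.finrank_mono (fixedVectors_le_of_mem_zpowers ?_)
        simpa [horder] using pow_gcd_orderOf_mem_zpowers_zpow c m
    _ ≤ Int.gcd (Fintype.card α) m := hc.finrank_fixedVectors_pow_le hsupp hgcd

end Equiv.Perm

section swapLen

variable {n : ℕ}

lemma exists_isSwap_list_length_eq_swapLen (σ : Perm (Fin n)) :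
    ∃ l : List (Perm (Fin n)), (∀ τ ∈ l, τ.IsSwap) ∧ l.length = swapLen n σ ∧ l.prod = σ := by
  obtain ⟨l, hprod, hswap⟩ := (truncSwapFactors σ).out
  exact Nat.sInf_mem (s := {k | ∃ l : List (Perm (Fin n)),
    (∀ τ ∈ l, τ.IsSwap) ∧ l.length = k ∧ l.prod = σ}) ⟨l.length, l, hswap, rfl, hprod⟩

lemma swapLen_le_length {σ : Perm (Fin n)} (l : List (Perm (Fin n)))
    (hl : ∀ τ ∈ l, τ.IsSwap) (hprod : l.prod = σ) : swapLen n σ ≤ l.length :=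
  Nat.sInf_le ⟨l, hl, rfl, hprod⟩

lemma swapLen_one : swapLen n 1 = 0 :=
  Nat.le_zero.mp (swapLen_le_length [] (by simp) rfl)

lemma swapLen_swap_le (a b : Fin n) : swapLen n (swap a b) ≤ 1 := by
  rcases eq_or_ne a b with rfl | hab
  · rw [swap_self, ← Perm.one_def, swapLen_one]
    exact zero_le_one
  · exact swapLen_le_length [swap a b] (by simpa using ⟨a, b, hab, rfl⟩) (by simp)

lemma swapLen_mul_le (σ τ : Perm (Fin n)) : swapLen n (σ * τ) ≤ swapLen n σ + swapLen n τ := by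
  obtain ⟨l, hl, hlen, rfl⟩ := exists_isSwap_list_length_eq_swapLen σ
  obtain ⟨l', hl', hlen', rfl⟩ := exists_isSwap_list_length_eq_swapLen τ
  rw [← hlen, ← hlen', ← List.length_append]
  exact swapLen_le_length _ (fun τ hτ => (List.mem_append.mp hτ).elim (hl τ) (hl' τ))
    List.prod_append

lemma swapLen_formPerm_le : ∀ l : List (Fin n), swapLen n l.formPerm ≤ l.length - 1
  | [] | [_] => by simp [swapLen_one]
  | x :: y :: l => by
    rw [List.formPerm_cons_cons]
    have hswap := swapLen_swap_le x y
    have hrest := swapLen_formPerm_le (y :: l)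
    have hmul := swapLen_mul_le (swap x y) (y :: l).formPerm
    simp only [List.length_cons] at hrest ⊢
    omega

lemma Equiv.Perm.IsCycle.swapLen_add_one_le {c : Perm (Fin n)} (hc : c.IsCycle) :
    swapLen n c + 1 ≤ #c.support := by
  obtain ⟨x, hx, -⟩ := id hc
  have hlen := swapLen_formPerm_le (c.toList x)
  rw [formPerm_toList, hc.cycleOf_eq hx, length_toList, hc.cycleOf_eq hx] at hlen
  have hpos : 0 < #c.support := card_pos.mpr ⟨x, mem_support.mpr hx⟩
  omega

lemma card_le_finrank_fixedVectors_add_swapLen (σ : Perm (Fin n)) :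
    n ≤ finrank ℚ (fixedVectors ℚ σ) + swapLen n σ := by
  obtain ⟨l, hl, hlen, rfl⟩ := exists_isSwap_list_length_eq_swapLen σ
  simpa [hlen] using card_le_finrank_fixedVectors_prod_add_length (K := ℚ) l hl

lemma Equiv.Perm.IsCycle.le_two_mul_swapLen_of_mem_zpowers {c w : Perm (Fin n)} (hc : c.IsCycle)
    (hsupp : c.support = univ) (hw : w ∈ zpowers c) (hw1 : w ≠ 1) :
    n ≤ 2 * swapLen n w := by
  obtain ⟨m, rfl⟩ := mem_zpowers_iff.mp hw
  have hfix := hc.finrank_fixedVectors_zpow_le_gcd (K := ℚ) hsupp m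
  have hlen := card_le_finrank_fixedVectors_add_swapLen (c ^ m)
  have horder : orderOf c = n := by rw [hc.orderOf_eq_card hsupp, Fintype.card_fin]
  have hn : n ≠ 0 := horder ▸ (orderOf_pos c).ne'
  have hdvd : Int.gcd n m ∣ n := Int.gcd_dvd_natAbs_left n m
  have hne : Int.gcd n m ≠ n := fun h => hw1 <| orderOf_dvd_iff_zpow_eq_one.mp <| by
    rw [horder]
    exact Int.gcd_eq_natAbs_left_iff_dvd.mp h
  have hhalf : 2 * Int.gcd n m ≤ n := by
    by_contra! h
    exact hne (Nat.eq_of_dvd_of_lt_two_mul hn hdvd h).symm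
  rw [Fintype.card_fin] at hfix
  omega

end swapLen

/-- For an `n`-cycle `c` in `S_n`, the intersection of the cyclic subgroup `⟨c⟩` with the
absolute-order interval `[1, c]` is exactly `{1, c}`. -/
theorem zpowers_inter_interval (n : ℕ) (c : Equiv.Perm (Fin n))
    (hc : c.IsCycle) (hsupp : c.support = Finset.univ) :
    {w : Equiv.Perm (Fin n) | w ∈ Subgroup.zpowers c ∧
      swapLen n w + swapLen n (w⁻¹ * c) = swapLen n c} = {1, c} := by
  have hlen : swapLen n c + 1 ≤ n := by simpa [hsupp] using hc.swapLen_add_one_le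
  ext w
  simp only [Set.mem_ofPred_eq, Set.mem_insert_iff, Set.mem_singleton_iff]
  constructor
  · rintro ⟨hw, hsum⟩
    by_contra! hne
    have h₁ := hc.le_two_mul_swapLen_of_mem_zpowers hsupp hw hne.1
    have h₂ := hc.le_two_mul_swapLen_of_mem_zpowers hsupp (mul_mem (inv_mem hw) (mem_zpowers c))
      (mt inv_mul_eq_one.mp hne.2)
    omega
  · rintro (rfl | rfl) <;> simp [swapLen_one, mem_zpowers]
end
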